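/- (Feasibility of the fractional T-join solution in Case A1.) Let x be a feasible solution of the path-variant Held-Karp relaxation with respect to s and t, let γ ∈ (0,1), let F be a spanning tree of the complete graph on V, and let S ⊆ F be a set of tree edges each satisfying x_e ≥ 1 − γ. Let T be the wrong-parity set of F. Define y : E → ℝ by y_e = 1 if e ∈ F \ S, y_e = x_e/(2(1 − γ)) if e ∈ S, and y_e = x_e if e ∉ F. Then for every nonempty proper subset U ⊊ V with |U ∩ T| odd, y(δ(U)) ≥ 1. -/

import Mathlib

open Finset

namespace TSPPath

noncomputable section
open scoped Classical

/-- Edge set of the complete graph on `Fin n`: all unordered pairs of distinct vertices. -/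
def Edges (n : ℕ) : Finset (Sym2 (Fin n)) := Finset.univ.filter (fun e => ¬ e.IsDiag)

/-- `cutSet n S` is `δ(S)`: the edges with exactly one endpoint in `S`. -/
def cutSet (n : ℕ) (S : Finset (Fin n)) : Finset (Sym2 (Fin n)) :=
  (Edges n).filter (fun e => ∃ u v : Fin n, e = s(u, v) ∧ u ∈ S ∧ v ∉ S)

/-- `inSet n S` is `E(S)`: the edges with both endpoints in `S`. -/
def inSet (n : ℕ) (S : Finset (Fin n)) : Finset (Sym2 (Fin n)) :=
  (Edges n).filter (fun e => ∀ v ∈ e, v ∈ S)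

/-- Degree of a vertex in an edge set. -/
def deg (n : ℕ) (H : Finset (Sym2 (Fin n))) (v : Fin n) : ℕ :=
  (H.filter (fun e => v ∈ e)).card

/-- Degree of a vertex in an edge multiset (counting multiplicity). -/
def mdeg (n : ℕ) (L : Multiset (Sym2 (Fin n))) (v : Fin n) : ℕ :=
  (L.filter (fun e => v ∈ e)).card

/-- Feasibility for the path-variant Held–Karp relaxation with endpoints `s, t`. -/
def HKPathFeasible (n : ℕ) (s t : Fin n) (x : Sym2 (Fin n) → ℝ) : Prop :=
  (∀ e, 0 ≤ x e) ∧
  (∑ e ∈ cutSet n {s}, x e = 1) ∧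
  (∑ e ∈ cutSet n {t}, x e = 1) ∧
  (∀ v : Fin n, v ≠ s → v ≠ t → ∑ e ∈ cutSet n {v}, x e = 2) ∧
  (∀ S : Finset (Fin n), S.Nonempty → S ≠ Finset.univ →
      ((s ∈ S ∧ t ∉ S) ∨ (s ∉ S ∧ t ∈ S)) → 1 ≤ ∑ e ∈ cutSet n S, x e) ∧
  (∀ S : Finset (Fin n), S.Nonempty → S ≠ Finset.univ →
      ¬((s ∈ S ∧ t ∉ S) ∨ (s ∉ S ∧ t ∈ S)) → 2 ≤ ∑ e ∈ cutSet n S, x e)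

/-- `c` is a metric: nonnegative, symmetric, vanishing on the diagonal, triangle inequality. -/
def IsMetric (n : ℕ) (c : Fin n → Fin n → ℝ) : Prop :=
  (∀ u v, 0 ≤ c u v) ∧ (∀ u v, c u v = c v u) ∧ (∀ u, c u u = 0) ∧
  (∀ u v w, c u w ≤ c u v + c v w)

/-- Cost of an unordered edge (defined by symmetrization, which agrees with `c u v`
whenever `c` is symmetric). -/
def ecost (n : ℕ) (c : Fin n → Fin n → ℝ) (e : Sym2 (Fin n)) : ℝ :=
  Sym2.lift ⟨fun u v => (c u v + c v u) / 2, by intro u v; ring⟩ e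

/-- `c(x) = ∑_{e ∈ E} x_e c(e)`. -/
def xcost (n : ℕ) (c : Fin n → Fin n → ℝ) (x : Sym2 (Fin n) → ℝ) : ℝ :=
  ∑ e ∈ Edges n, x e * ecost n c e

/-- `c(F) = ∑_{e ∈ F} c(e)` for an edge set `F`. -/
def fcost (n : ℕ) (c : Fin n → Fin n → ℝ) (F : Finset (Sym2 (Fin n))) : ℝ :=
  ∑ e ∈ F, ecost n c e

/-- `H` is (the edge set of) a spanning tree of the complete graph on `Fin n`. -/
def IsSpanningTree (n : ℕ) (H : Finset (Sym2 (Fin n))) : Prop :=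
  H ⊆ Edges n ∧ (SimpleGraph.fromEdgeSet (H : Set (Sym2 (Fin n)))).Connected ∧
    H.card = n - 1

/-- The wrong-parity set of an edge set `H`: internal vertices of odd degree
together with the endpoints of even degree. -/
def wrongParity (n : ℕ) (s t : Fin n) (H : Finset (Sym2 (Fin n))) : Finset (Fin n) :=
  Finset.univ.filter (fun v =>
    if v = s ∨ v = t then Even (deg n H v) else Odd (deg n H v))

/-- `M` is a perfect matching on the vertex set `T`: vertex-disjoint edges covering
exactly the vertices of `T`. -/
def IsPerfectMatchingOn (n : ℕ) (T : Finset (Fin n)) (M : Finset (Sym2 (Fin n))) : Prop :=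
  M ⊆ Edges n ∧ (∀ v ∈ T, deg n M v = 1) ∧ (∀ v : Fin n, v ∉ T → deg n M v = 0)

/-- `J` is a `T`-join: exactly the vertices of `T` have odd degree in `J`. -/
def IsTJoin (n : ℕ) (T : Finset (Fin n)) (J : Finset (Sym2 (Fin n))) : Prop :=
  J ⊆ Edges n ∧ ∀ v : Fin n, Odd (deg n J v) ↔ v ∈ T

/-- There is a Hamiltonian path from `s` to `t` in the complete graph on `Fin n`
of cost (w.r.t. the metric `c`) at most `B`. -/
def ExistsHamPath (n : ℕ) (s t : Fin n) (c : Fin n → Fin n → ℝ) (B : ℝ) : Prop :=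
  ∃ p : (⊤ : SimpleGraph (Fin n)).Walk s t,
    p.IsHamiltonian ∧ (p.edges.map (ecost n c)).sum ≤ B

/-- Connectivity of the multigraph `(V, L)` (equivalently, of its support graph,
which must span all of `Fin n`). -/
def MConnected (n : ℕ) (L : Multiset (Sym2 (Fin n))) : Prop :=
  (SimpleGraph.fromEdgeSet {e | e ∈ L}).Connected

/-- The multiset of edges traversed by the walk given by a vertex list `w`. -/
def walkEdges (n : ℕ) (w : List (Fin n)) : Multiset (Sym2 (Fin n)) :=
  ((w.zip w.tail).map (Function.uncurry Sym2.mk) : List (Sym2 (Fin n)))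

/-- `w` is an Eulerian trail from `s` to `t` of the edge multiset `L`: a walk from `s`
to `t` whose multiset of traversed edges is exactly `L` (with multiplicity). -/
def IsEulerianTrail (n : ℕ) (L : Multiset (Sym2 (Fin n))) (s t : Fin n)
    (w : List (Fin n)) : Prop :=
  w.head? = some s ∧ w.getLast? = some t ∧ walkEdges n w = L

/-! Since `x ≤ 2` and `γ > 0`, we have `y ≥ x / 2` on every edge, which settles the cuts
not separating `s` from `t`, where `x(δ(U)) ≥ 2`. If `U` separates `s` from `t`, then
`|F ∩ δ(U)| ≡ ∑_{v ∈ U} deg_F v ≡ |U ∩ T| + |U ∩ {s, t}| ≡ 1 + 1 (mod 2)`, and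
`F ∩ δ(U) ≠ ∅` since `F` is connected; so at least two tree edges cross `U`, and `y ≥ 1/2`
on tree edges. -/

section

variable {n : ℕ}

lemma mk_mem_Edges {a b : Fin n} : s(a, b) ∈ Edges n ↔ a ≠ b := by
  simp [Edges]

lemma mk_mem_cutSet {U : Finset (Fin n)} {a b : Fin n} :
    s(a, b) ∈ cutSet n U ↔ a ≠ b ∧ (a ∈ U ∧ b ∉ U ∨ b ∈ U ∧ a ∉ U) := by
  simp only [cutSet, mem_filter, mk_mem_Edges, Sym2.eq_iff]
  constructor
  · rintro ⟨hab, u, v, ⟨rfl, rfl⟩ | ⟨rfl, rfl⟩, hu, hv⟩ <;> tauto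
  · rintro ⟨hab, ⟨ha, hb⟩ | ⟨hb, ha⟩⟩
    · exact ⟨hab, a, b, Or.inl ⟨rfl, rfl⟩, ha, hb⟩
    · exact ⟨hab, b, a, Or.inr ⟨rfl, rfl⟩, hb, ha⟩

lemma mk_mem_inSet {U : Finset (Fin n)} {a b : Fin n} :
    s(a, b) ∈ inSet n U ↔ a ≠ b ∧ a ∈ U ∧ b ∈ U := by
  simp [inSet, mk_mem_Edges]

lemma card_filter_mem_of_mem_Edges (U : Finset (Fin n)) {e : Sym2 (Fin n)}
    (he : e ∈ Edges n) :
    #(U.filter (· ∈ e)) = 2 * (if e ∈ inSet n U then 1 else 0) +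
      (if e ∈ cutSet n U then 1 else 0) := by
  induction e using Sym2.ind with
  | _ a b =>
    have hab : a ≠ b := mk_mem_Edges.mp he
    have hfilter : U.filter (· ∈ s(a, b)) = U ∩ {a, b} := by ext; simp [Sym2.mem_iff]
    rw [hfilter]
    simp only [mk_mem_inSet, mk_mem_cutSet]
    by_cases ha : a ∈ U <;> by_cases hb : b ∈ U <;> simp [ha, hb, hab]

lemma sum_deg_eq_inSet_cutSet {H : Finset (Sym2 (Fin n))} (hH : H ⊆ Edges n)
    (U : Finset (Fin n)) :
    ∑ v ∈ U, deg n H v = 2 * #(H ∩ inSet n U) + #(H ∩ cutSet n U) := by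
  calc ∑ v ∈ U, deg n H v = ∑ e ∈ H, #(U.filter (· ∈ e)) := by
        simp only [deg, card_filter]; exact sum_comm
    _ = _ := by
        rw [sum_congr rfl fun e he => card_filter_mem_of_mem_Edges U (hH he), sum_add_distrib,
          ← mul_sum, sum_boole, sum_boole, filter_mem_eq_inter, filter_mem_eq_inter]
        simp

lemma deg_cast_zmod_two (s t : Fin n) (H : Finset (Sym2 (Fin n))) (v : Fin n) :
    (deg n H v : ZMod 2) = (if v ∈ wrongParity n s t H then 1 else 0) +
      (if v ∈ ({s, t} : Finset (Fin n)) then 1 else 0) := by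
  have hpar := Nat.even_or_odd (deg n H v)
  rw [← ZMod.natCast_eq_zero_iff_even, ← ZMod.natCast_eq_one_iff_odd] at hpar
  by_cases hv : v = s ∨ v = t <;>
    rcases hpar with h | h <;>
    simp [wrongParity, hv, h, ← ZMod.natCast_eq_zero_iff_even, ← ZMod.natCast_eq_one_iff_odd,
      CharTwo.add_self_eq_zero]

lemma even_card_inter_cutSet {s t : Fin n} {H : Finset (Sym2 (Fin n))}
    (hH : H ⊆ Edges n) {U : Finset (Fin n)} (hsep : s ∈ U ∧ t ∉ U ∨ s ∉ U ∧ t ∈ U)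
    (hodd : Odd #(U ∩ wrongParity n s t H)) : Even #(H ∩ cutSet n U) := by
  have hst : #(U ∩ {s, t}) = 1 := by
    rcases hsep with ⟨hs, ht⟩ | ⟨hs, ht⟩ <;> simp [*]
  rw [← ZMod.natCast_eq_zero_iff_even]
  have hsum := congrArg (Nat.cast : ℕ → ZMod 2) (sum_deg_eq_inSet_cutSet hH U)
  push_cast at hsum
  rw [sum_congr rfl fun v _ => deg_cast_zmod_two s t H v, sum_add_distrib, sum_boole, sum_boole,
    filter_mem_eq_inter, filter_mem_eq_inter, ZMod.natCast_eq_one_iff_odd.mpr hodd, hst] at hsum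
  grind

lemma exists_mem_inter_cutSet {H : Finset (Sym2 (Fin n))}
    (hconn : (SimpleGraph.fromEdgeSet (H : Set (Sym2 (Fin n)))).Connected)
    {U : Finset (Fin n)} (hne : U.Nonempty) (hU : U ≠ univ) : (H ∩ cutSet n U).Nonempty := by
  obtain ⟨u, hu⟩ := hne
  obtain ⟨v, -, hv⟩ := exists_of_ssubset (ssubset_univ_iff.mpr hU)
  obtain ⟨d, -, hdU, hdU'⟩ := (hconn.preconnected u v).some.exists_boundary_dart (↑U) hu hv
  have hadj := d.adj
  rw [SimpleGraph.fromEdgeSet_adj] at hadj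
  exact ⟨s(d.fst, d.snd),
    mem_inter.mpr ⟨hadj.1, mk_mem_cutSet.mpr ⟨hadj.2, Or.inl ⟨hdU, hdU'⟩⟩⟩⟩

lemma two_le_card_inter_cutSet {s t : Fin n} {H : Finset (Sym2 (Fin n))}
    (hH : H ⊆ Edges n) (hconn : (SimpleGraph.fromEdgeSet (H : Set (Sym2 (Fin n)))).Connected)
    {U : Finset (Fin n)} (hne : U.Nonempty) (hU : U ≠ univ)
    (hsep : s ∈ U ∧ t ∉ U ∨ s ∉ U ∧ t ∈ U) (hodd : Odd #(U ∩ wrongParity n s t H)) :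
    2 ≤ #(H ∩ cutSet n U) := by
  obtain ⟨k, hk⟩ := even_card_inter_cutSet hH hsep hodd
  have := (exists_mem_inter_cutSet hconn hne hU).card_pos
  omega

lemma HKPathFeasible.le_two {s t : Fin n} {x : Sym2 (Fin n) → ℝ}
    (hx : HKPathFeasible n s t x) {e : Sym2 (Fin n)} (he : e ∈ Edges n) : x e ≤ 2 := by
  obtain ⟨hx0, hxs, hxt, hxv, -⟩ := hx
  induction e using Sym2.ind with
  | _ a b =>
    have hab : a ≠ b := mk_mem_Edges.mp he
    have hle : x s(a, b) ≤ ∑ e ∈ cutSet n {a}, x e :=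
      single_le_sum (fun e _ => hx0 e) (mk_mem_cutSet.mpr ⟨hab, by simp [hab.symm]⟩)
    by_cases has : a = s
    · subst has; linarith
    by_cases hat : a = t
    · subst hat; linarith
    linarith [hxv a has hat]

end

theorem Tjoin_LP_feasibility_general (n : ℕ) (s t : Fin n)
    (x : Sym2 (Fin n) → ℝ) (hx : HKPathFeasible n s t x)
    (γ : ℝ) (hγ0 : 0 < γ) (hγ1 : γ < 1)
    (F : Finset (Sym2 (Fin n))) (hF : IsSpanningTree n F)
    (S : Finset (Sym2 (Fin n))) (hS : ∀ e ∈ S, 1 - γ ≤ x e)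
    (y : Sym2 (Fin n) → ℝ)
    (hy : ∀ e ∈ Edges n,
      y e = if e ∈ S then x e / (2 * (1 - γ)) else if e ∈ F then 1 else x e) :
    ∀ U : Finset (Fin n), U.Nonempty → U ≠ Finset.univ →
      Odd (U ∩ wrongParity n s t F).card → 1 ≤ ∑ e ∈ cutSet n U, y e := by
  intro U hne hU hodd
  have ⟨hx0, _, _, _, _, hx2⟩ := hx
  have hγ : 0 < 2 * (1 - γ) := by linarith
  have hcut : cutSet n U ⊆ Edges n := filter_subset _ _
  have hyx : ∀ e ∈ Edges n, x e / 2 ≤ y e := fun e he => by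
    rw [hy e he]
    split_ifs
    · exact div_le_div_of_nonneg_left (hx0 e) hγ (by linarith)
    · linarith [hx.le_two he]
    · linarith [hx0 e]
  by_cases hsep : s ∈ U ∧ t ∉ U ∨ s ∉ U ∧ t ∈ U
  · have hyF : ∀ e ∈ F, 1 / 2 ≤ y e := fun e he => by
      rw [hy e (hF.1 he)]
      split_ifs with heS
      · rw [div_le_div_iff₀ two_pos hγ]; linarith [hS e heS]
      · norm_num
    have h2 : (2 : ℝ) ≤ #(F ∩ cutSet n U) :=
      mod_cast two_le_card_inter_cutSet hF.1 hF.2.1 hne hU hsep hodd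
    calc (1 : ℝ) ≤ #(F ∩ cutSet n U) • (1 / 2 : ℝ) := by rw [nsmul_eq_mul]; linarith
      _ ≤ ∑ e ∈ F ∩ cutSet n U, y e :=
        card_nsmul_le_sum _ _ _ fun e he => hyF e (mem_inter.mp he).1
      _ ≤ ∑ e ∈ cutSet n U, y e := sum_le_sum_of_subset_of_nonneg inter_subset_right
        fun e he _ => (div_nonneg (hx0 e) two_pos.le).trans (hyx e (hcut he))
  · calc (1 : ℝ) ≤ (∑ e ∈ cutSet n U, x e) / 2 := by linarith [hx2 U hne hU hsep]
      _ = ∑ e ∈ cutSet n U, x e / 2 := sum_div _ _ _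
      _ ≤ ∑ e ∈ cutSet n U, y e := sum_le_sum fun e he => hyx e (hcut he)

/-- (Feasibility of the fractional `T`-join solution in Case A1.)
With `y` equal to `1` on `F \ S`, `x_e/(2(1−γ))` on `S`, and `x_e` elsewhere, every
cut `U` with `|U ∩ T|` odd satisfies `y(δ(U)) ≥ 1`, where `T` is the wrong-parity set
of the spanning tree `F`. -/
theorem Tjoin_LP_feasibility (n : ℕ) (hn : 2 ≤ n) (s t : Fin n) (hst : s ≠ t)
    (x : Sym2 (Fin n) → ℝ) (hx : HKPathFeasible n s t x)
    (γ : ℝ) (hγ0 : 0 < γ) (hγ1 : γ < 1)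
    (F : Finset (Sym2 (Fin n))) (hF : IsSpanningTree n F)
    (S : Finset (Sym2 (Fin n))) (hSF : S ⊆ F) (hS : ∀ e ∈ S, 1 - γ ≤ x e)
    (y : Sym2 (Fin n) → ℝ)
    (hy : ∀ e ∈ Edges n,
      y e = if e ∈ S then x e / (2 * (1 - γ)) else if e ∈ F then 1 else x e) :
    ∀ U : Finset (Fin n), U.Nonempty → U ≠ Finset.univ →
      Odd (U ∩ wrongParity n s t F).card → 1 ≤ ∑ e ∈ cutSet n U, y e :=
  Tjoin_LP_feasibility_general n s t x hx γ hγ0 hγ1 F hF S hS y hy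

end
end TSPPath
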